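/- For d ≥ 0 and p ≥ 1, the function H_{d,p}(γ) = -log det(1 - γγ†) - d·log det((1-γ)(1-γ)†) + p·H_d(0), defined on p×p complex matrices γ with γγ† < 1, is nonnegative and vanishes uniquely at γ = γ_d·1, where γ_d = -d/(1+d). -/

import Mathlib

open Matrix
open scoped ComplexOrder

/-- `H_d(0) = (1+2d)·log(1+2d) - 2(1+d)·log(1+d)`. -/
noncomputable def Hd0 (d : ℝ) : ℝ :=
  (1 + 2 * d) * Real.log (1 + 2 * d) - 2 * (1 + d) * Real.log (1 + d)

/-- The matrix rate function
`H_{d,p}(γ) = -log det(1-γγ†) - d·log det((1-γ)(1-γ)†) + p·H_d(0)`. -/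
noncomputable def Hdp (d : ℝ) (p : ℕ) (γ : Matrix (Fin p) (Fin p) ℂ) : ℝ :=
  -Real.log ((1 - γ * γᴴ).det.re)
    - d * Real.log (((1 - γ) * (1 - γ)ᴴ).det.re)
    + p * Hd0 d

/-!
Both `log det` terms are concave, so each is bounded above by its tangent at a scalar matrix
(`log λ ≤ log t + λ / t - 1` on the eigenvalues). Taking the tangent points
`(1 - γ_d²) • 1` and `(1 - γ_d)² • 1`, the constant `p·H_d(0)` cancels the logarithms and the
traces combine into `H_{d,p}(γ) ≥ (1+d)³/(1+2d)² · ‖γ - γ_d • 1‖²_F`. Equality at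
`γ = γ_d • 1` is a direct computation.
-/

theorem Real.log_le_log_add_div_sub_one {x t : ℝ} (hx : 0 < x) (ht : 0 < t) :
    Real.log x ≤ Real.log t + x / t - 1 := by
  have h := Real.log_le_sub_one_of_pos (div_pos hx ht)
  rw [Real.log_div hx.ne' ht.ne'] at h
  linarith

namespace Matrix

section Trace

variable {m n : Type*} [Fintype m] [Fintype n]

theorem re_trace_mul_conjTranspose_self_nonneg (X : Matrix m n ℂ) :
    0 ≤ (X * Xᴴ).trace.re :=
  (Complex.nonneg_iff.mp (posSemidef_self_mul_conjTranspose X).trace_nonneg).1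

theorem re_trace_mul_conjTranspose_self_eq_zero_iff {X : Matrix m n ℂ} :
    (X * Xᴴ).trace.re = 0 ↔ X = 0 := by
  have him := (Complex.nonneg_iff.mp (posSemidef_self_mul_conjTranspose X).trace_nonneg).2
  rw [← trace_mul_conjTranspose_self_eq_zero_iff]
  exact ⟨fun h => Complex.ext h him.symm, fun h => by simp [h]⟩

end Trace

variable {n : Type*} [Fintype n] [DecidableEq n]

theorem PosDef.log_det_re_le {A : Matrix n n ℂ} (hA : A.PosDef) {t : ℝ} (ht : 0 < t) :
    Real.log A.det.re ≤ Fintype.card n * (Real.log t - 1) + A.trace.re / t := by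
  have hpos := hA.eigenvalues_pos
  have hdet : A.det.re = ∏ i, hA.1.eigenvalues i := by
    rw [hA.1.det_eq_prod_eigenvalues]; norm_cast
  have htr : A.trace.re = ∑ i, hA.1.eigenvalues i := by
    rw [hA.1.trace_eq_sum_eigenvalues]; norm_cast
  rw [hdet, htr, Real.log_prod fun i _ => (hpos i).ne', Finset.sum_div]
  calc ∑ i, Real.log (hA.1.eigenvalues i)
      ≤ ∑ i, (Real.log t - 1 + hA.1.eigenvalues i / t) :=
        Finset.sum_le_sum fun i _ => by linarith [Real.log_le_log_add_div_sub_one (hpos i) ht]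
    _ = _ := by simp only [Finset.sum_add_distrib, Finset.sum_const, Finset.card_univ, nsmul_eq_mul]

theorem re_trace_sub_smul_one_mul_conjTranspose (γ : Matrix n n ℂ) (c : ℝ) :
    ((γ - (c : ℂ) • 1) * (γ - (c : ℂ) • 1)ᴴ).trace.re
      = (γ * γᴴ).trace.re - 2 * c * γ.trace.re + Fintype.card n * c ^ 2 := by
  simp only [Complex.coe_smul, conjTranspose_sub, conjTranspose_smul, star_trivial,
    conjTranspose_one, mul_sub, sub_mul, Algebra.smul_mul_assoc, one_mul, Algebra.mul_smul_comm,
    mul_one, trace_sub, trace_smul, trace_conjTranspose, RCLike.star_def, Complex.real_smul,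
    trace_one, Complex.sub_re, Complex.mul_re, Complex.ofReal_re, Complex.conj_re,
    Complex.ofReal_im, Complex.conj_im, mul_neg, zero_mul, neg_zero, sub_zero, Complex.natCast_re,
    Complex.natCast_im, mul_zero, Complex.mul_im, add_zero]
  ring

theorem re_trace_one_sub_mul_conjTranspose (γ : Matrix n n ℂ) :
    ((1 - γ) * (1 - γ)ᴴ).trace.re
      = (γ * γᴴ).trace.re - 2 * γ.trace.re + Fintype.card n := by
  have h := re_trace_sub_smul_one_mul_conjTranspose γ 1
  rw [Complex.ofReal_one, one_smul, ← neg_sub, conjTranspose_neg, neg_mul_neg] at h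
  rw [h]
  ring

theorem re_det_ofReal_smul_one (r : ℝ) :
    ((r : ℂ) • (1 : Matrix n n ℂ)).det.re = r ^ Fintype.card n := by
  rw [det_smul, det_one, mul_one, ← Complex.ofReal_pow, Complex.ofReal_re]

theorem ofReal_smul_one_mul_conjTranspose (a b : ℝ) :
    ((a : ℂ) • (1 : Matrix n n ℂ)) * ((b : ℂ) • 1)ᴴ = ((a * b : ℝ) : ℂ) • 1 := by
  rw [conjTranspose_smul, conjTranspose_one, Complex.star_def, Complex.conj_ofReal,
    smul_mul_smul, one_mul, Complex.ofReal_mul]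

omit [Fintype n] in
theorem one_sub_ofReal_smul_one (r : ℝ) :
    (1 : Matrix n n ℂ) - (r : ℂ) • 1 = ((1 - r : ℝ) : ℂ) • 1 := by
  rw [Complex.ofReal_sub, Complex.ofReal_one, sub_smul, one_smul]

/-- A fixed vector of `γᴴ` would be a null vector of `1 - γ * γᴴ`. -/
theorem posDef_one_sub_mul_conjTranspose {γ : Matrix n n ℂ} (hγ : (1 - γ * γᴴ).PosDef) :
    ((1 - γ) * (1 - γ)ᴴ).PosDef := by
  have hinj : Function.Injective (1 - γ)ᴴ.mulVec := by
    intro v w hvw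
    by_contra hne
    have hu : (1 - γ)ᴴ *ᵥ (v - w) = 0 := by rw [mulVec_sub, hvw, sub_self]
    rw [conjTranspose_sub, conjTranspose_one, sub_mulVec, one_mulVec, sub_eq_zero] at hu
    have hpos := hγ.dotProduct_mulVec_pos (sub_ne_zero.mpr hne)
    rw [sub_mulVec, one_mulVec, ← mulVec_mulVec, ← hu, dotProduct_sub, dotProduct_mulVec,
      ← conjTranspose_conjTranspose γ, ← star_mulVec, ← hu, sub_self] at hpos
    exact hpos.false
  simpa using PosDef.conjTranspose_mul_self _ hinj

end Matrix

theorem Hd0_eq_log_add_mul_log {d : ℝ} (hd : 0 < 1 + 2 * d) :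
    Hd0 d = Real.log ((1 + 2 * d) / (1 + d) ^ 2) + d * Real.log (((1 + 2 * d) / (1 + d)) ^ 2) := by
  have h1 : 0 < 1 + d := by linarith
  rw [Hd0, Real.log_div hd.ne' (by positivity), Real.log_pow, Real.log_pow,
    Real.log_div hd.ne' h1.ne']
  push_cast
  ring

theorem Hdp_ofReal_smul_one (d c : ℝ) (p : ℕ) :
    Hdp d p ((c : ℂ) • 1) = p * (Hd0 d - Real.log (1 - c ^ 2) - d * Real.log ((1 - c) ^ 2)) := by
  have hA : 1 - ((c : ℂ) • (1 : Matrix (Fin p) (Fin p) ℂ)) * ((c : ℂ) • 1)ᴴ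
      = ((1 - c ^ 2 : ℝ) : ℂ) • 1 := by
    rw [ofReal_smul_one_mul_conjTranspose, one_sub_ofReal_smul_one, sq]
  have hM : (1 - (c : ℂ) • (1 : Matrix (Fin p) (Fin p) ℂ)) * (1 - (c : ℂ) • 1)ᴴ
      = (((1 - c) ^ 2 : ℝ) : ℂ) • 1 := by
    rw [one_sub_ofReal_smul_one, ofReal_smul_one_mul_conjTranspose, sq]
  rw [Hdp, hA, hM, re_det_ofReal_smul_one, re_det_ofReal_smul_one, Real.log_pow, Real.log_pow,
    Fintype.card_fin]
  ring

theorem Hdp_neg_div_smul_one_eq_zero {d : ℝ} (hd : 0 < 1 + 2 * d) (p : ℕ) :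
    Hdp d p (((-(d / (1 + d)) : ℝ) : ℂ) • 1) = 0 := by
  have h1 : 1 + d ≠ 0 := by linarith
  have hA : 1 - (-(d / (1 + d))) ^ 2 = (1 + 2 * d) / (1 + d) ^ 2 := by
    field_simp; ring
  have hM : (1 - -(d / (1 + d))) ^ 2 = ((1 + 2 * d) / (1 + d)) ^ 2 := by
    field_simp; ring
  rw [Hdp_ofReal_smul_one, hA, hM, Hd0_eq_log_add_mul_log hd, sub_sub, sub_self, mul_zero]

theorem le_Hdp {d : ℝ} (hd : 0 ≤ d) {p : ℕ} {γ : Matrix (Fin p) (Fin p) ℂ}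
    (hγ : (1 - γ * γᴴ).PosDef) :
    (1 + d) ^ 3 / (1 + 2 * d) ^ 2 *
        ((γ - ((-(d / (1 + d)) : ℝ) : ℂ) • 1) * (γ - ((-(d / (1 + d)) : ℝ) : ℂ) • 1)ᴴ).trace.re
      ≤ Hdp d p γ := by
  have h1 : 0 < 1 + d := by linarith
  have h2 : 0 < 1 + 2 * d := by linarith
  have hA := hγ.log_det_re_le (t := (1 + 2 * d) / (1 + d) ^ 2) (by positivity)
  have hM := (posDef_one_sub_mul_conjTranspose hγ).log_det_re_le
    (t := ((1 + 2 * d) / (1 + d)) ^ 2) (by positivity)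
  rw [trace_sub, trace_one, Complex.sub_re, Complex.natCast_re, Fintype.card_fin] at hA
  rw [re_trace_one_sub_mul_conjTranspose, Fintype.card_fin] at hM
  rw [re_trace_sub_smul_one_mul_conjTranspose, Fintype.card_fin, Hdp, Hd0_eq_log_add_mul_log h2]
  set S := (γ * γᴴ).trace.re
  set T := γ.trace.re
  have htraces : (p : ℝ) * (1 + d) - (p - S) / ((1 + 2 * d) / (1 + d) ^ 2)
        - d * ((S - 2 * T + p) / ((1 + 2 * d) / (1 + d)) ^ 2)
      = (1 + d) ^ 3 / (1 + 2 * d) ^ 2 * (S - 2 * -(d / (1 + d)) * T + p * (-(d / (1 + d))) ^ 2) := by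
    field_simp
    ring
  linarith [mul_le_mul_of_nonneg_left hM hd]

theorem Hdp_nonneg_vanishes_general (d : ℝ) (hd : 0 ≤ d) (p : ℕ)
    (γ : Matrix (Fin p) (Fin p) ℂ) (hγ : (1 - γ * γᴴ).PosDef) :
    0 ≤ Hdp d p γ ∧
      (Hdp d p γ = 0 ↔ γ = ((-(d / (1 + d)) : ℝ) : ℂ) • (1 : Matrix (Fin p) (Fin p) ℂ)) := by
  set γd : Matrix (Fin p) (Fin p) ℂ := ((-(d / (1 + d)) : ℝ) : ℂ) • 1
  have hκ : 0 < (1 + d) ^ 3 / (1 + 2 * d) ^ 2 := by positivity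
  have hbound := le_Hdp hd hγ
  have hdist := re_trace_mul_conjTranspose_self_nonneg (γ - γd)
  refine ⟨(mul_nonneg hκ.le hdist).trans hbound, fun hzero => ?_, ?_⟩
  · have hdist_zero : ((γ - γd) * (γ - γd)ᴴ).trace.re = 0 :=
      le_antisymm (nonpos_of_mul_nonpos_right (hzero ▸ hbound) hκ) hdist
    exact sub_eq_zero.mp (re_trace_mul_conjTranspose_self_eq_zero_iff.mp hdist_zero)
  · rintro rfl
    exact Hdp_neg_div_smul_one_eq_zero (by linarith) p

theorem Hdp_nonneg_vanishes (d : ℝ) (hd : 0 ≤ d) (p : ℕ) (hp : 1 ≤ p)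
    (γ : Matrix (Fin p) (Fin p) ℂ) (hγ : (1 - γ * γᴴ).PosDef) :
    0 ≤ Hdp d p γ ∧
      (Hdp d p γ = 0 ↔ γ = ((-(d / (1 + d)) : ℝ) : ℂ) • (1 : Matrix (Fin p) (Fin p) ℂ)) :=
  Hdp_nonneg_vanishes_general d hd p γ hγ
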